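/- There exists a constant c > 0 such that for every ε ∈ [0,1], every σ ∈ ℝ and every k ∈ ℤ³, the complex modulus satisfies |−2πiσ + α_ε(k)| ≥ c·((1 + |σ|^{1/2} + |k|)² + ε·|k|⁴). In particular |Q₀^ε(σ,k)| ≤ c⁻¹·(1 + |σ|^{1/2} + |k|)^{−2} for all ε ∈ [0,1], σ ∈ ℝ, k ∈ ℤ³. -/

import Mathlib

open Real

noncomputable section

/-- The lattice `ℤ³`. -/
abbrev Z3 := Fin 3 → ℤ

/-- Euclidean norm `|k|` of `k ∈ ℤ³`. -/
def knorm (k : Z3) : ℝ := Real.sqrt (∑ i, ((k i : ℝ)) ^ 2)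

/-- `α_ε(k) = 4π²|k|² + 16π⁴ε|k|⁴ + 1`. -/
def alphaE (ε : ℝ) (k : Z3) : ℝ :=
  4 * π ^ 2 * (knorm k) ^ 2 + 16 * π ^ 4 * ε * (knorm k) ^ 4 + 1

/-- `Q₀^ε(σ,k) = 1/(−2πiσ + α_ε(k))`. -/
def Q0e (ε : ℝ) (μ : ℝ × Z3) : ℂ :=
  1 / (-2 * (π : ℂ) * Complex.I * (μ.1 : ℂ) + (alphaE ε μ.2 : ℂ))

/-- Uniform lower bound `|−2πiσ + α_ε(k)| ≥ c((1+|σ|^{1/2}+|k|)² + ε|k|⁴)`, and hence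
the uniform upper bound `|Q₀^ε(σ,k)| ≤ c⁻¹(1+|σ|^{1/2}+|k|)⁻²`. -/
theorem Q0e_uniform_bound :
    ∃ c > 0, ∀ ε ∈ Set.Icc (0 : ℝ) 1, ∀ σ : ℝ, ∀ k : Z3,
      c * ((1 + Real.sqrt |σ| + knorm k) ^ 2 + ε * (knorm k) ^ 4) ≤
        ‖-2 * (π : ℂ) * Complex.I * (σ : ℂ) + (alphaE ε k : ℂ)‖ ∧
      ‖Q0e ε (σ, k)‖ ≤ c⁻¹ * ((1 + Real.sqrt |σ| + knorm k) ^ 2)⁻¹ := by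
  refine ⟨1/12, by norm_num, ?_⟩
  rintro ε ⟨hε0, hε1⟩ σ k
  set s := Real.sqrt |σ| with hs
  set K := knorm k with hK
  set z := -2 * (π : ℂ) * Complex.I * (σ : ℂ) + (alphaE ε k : ℂ) with hz
  have hs0 : 0 ≤ s := Real.sqrt_nonneg _
  have hs2 : s ^ 2 = |σ| := Real.sq_sqrt (abs_nonneg σ)
  have hK0 : 0 ≤ K := Real.sqrt_nonneg _
  have hpi : (3 : ℝ) < π := Real.pi_gt_three
  have hre : z.re = alphaE ε k := by simp [hz]
  have him : z.im = -(2 * π * σ) := by simp [hz]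
  have h1 : alphaE ε k ≤ ‖z‖ := by
    rw [← hre]; exact (le_abs_self _).trans (Complex.abs_re_le_norm z)
  have h2 : 2 * π * |σ| ≤ ‖z‖ := by
    have := Complex.abs_im_le_norm z
    rw [him] at this
    calc 2 * π * |σ| = |(-(2 * π * σ))| := by
          rw [abs_neg, abs_mul, abs_of_pos (by positivity : (0:ℝ) < 2 * π)]
      _ ≤ ‖z‖ := this
  have hεK4 : 0 ≤ ε * K ^ 4 := mul_nonneg hε0 (pow_nonneg hK0 4)
  have h9 : (9 : ℝ) ≤ π ^ 2 := by nlinarith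
  have h81 : (81 : ℝ) ≤ π ^ 4 := by nlinarith
  have hmain : 1/12 * ((1 + s + K) ^ 2 + ε * K ^ 4) ≤ ‖z‖ := by
    unfold alphaE at h1
    rw [← hK] at h1
    rw [← hs2] at h2
    nlinarith [sq_nonneg (s - 1), sq_nonneg (K - 1), sq_nonneg (s - K),
      mul_le_mul_of_nonneg_right h9 (sq_nonneg K),
      mul_le_mul_of_nonneg_right h81 hεK4, sq_nonneg s, sq_nonneg K]
  refine ⟨hmain, ?_⟩
  have hS : (0 : ℝ) < (1 + s + K) ^ 2 := by positivity
  have hcS : (0 : ℝ) < 1/12 * (1 + s + K) ^ 2 := by positivity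
  have hz0 : 1/12 * (1 + s + K) ^ 2 ≤ ‖z‖ := by nlinarith
  have hQ : ‖Q0e ε (σ, k)‖ = (‖z‖)⁻¹ := by
    simp [Q0e, hz, map_div₀]
  rw [hQ]
  calc (‖z‖)⁻¹ ≤ (1/12 * (1 + s + K) ^ 2)⁻¹ :=
        inv_anti₀ hcS hz0
    _ = (1/12 : ℝ)⁻¹ * ((1 + s + K) ^ 2)⁻¹ := by rw [mul_inv]
    _ = _ := by norm_num
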